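/- arXiv:hep-th/0407087 — 5 statements merged into one kernel-verified Lean document; each statement's English description precedes it below -/
import Mathlib

section
/- The quartic polynomial A(τ) = E τ^4 - (4 - 6E) τ^2 - (8E - 8) τ + 4 - 3E satisfies A(τ) > 0 for all real τ if and only if E lies in the open interval (2/3, (2+√3)/3). -/
/-!
Completing the square in the quartic term gives `E · A(τ) = (E τ² + E - 4/3)² + q(τ)` for a quadratic
`q` with discriminant `-(128/27) E (3E - 2)(12E - 9E² - 1)`, negative on the whole interval, so `A > 0`
there. Conversely, `A(-1) = 4(3E - 2)`, and `τ = 2 - √3` is a double root of `A` at `E = (2 + √3)/3`,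
with `A(2 - √3)` linear and decreasing in `E`.
-/

open Real Set

theorem quadratic_pos_of_discrim_neg {K : Type*} [Field K] [LinearOrder K] [IsStrictOrderedRing K]
    {a b c : K} (ha : 0 < a) (h : discrim a b c < 0) (x : K) : 0 < a * (x * x) + b * x + c := by
  have key : 4 * a * (a * (x * x) + b * x + c) = (2 * a * x + b) ^ 2 - discrim a b c := by
    rw [discrim]; ring
  have : 0 < 4 * a * (a * (x * x) + b * x + c) := by
    rw [key]; nlinarith [sq_nonneg (2 * a * x + b)]
  exact pos_of_mul_pos_right this (by positivity)

namespace TaubNUT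

def structureFn (E τ : ℝ) : ℝ :=
  E * τ ^ 4 - (4 - 6 * E) * τ ^ 2 - (8 * E - 8) * τ + (4 - 3 * E)

variable {E : ℝ}

theorem structureFn_neg_one (E : ℝ) : structureFn E (-1) = 4 * (3 * E - 2) := by
  rw [structureFn]; ring

theorem structureFn_two_sub_sqrt_three (E : ℝ) :
    structureFn E (2 - √3) = 24 * (3 * √3 - 5) * ((2 + √3) / 3 - E) := by
  have h3 : √3 ^ 2 = 3 := sq_sqrt (by norm_num)
  rw [structureFn]
  linear_combination (E * √3 ^ 2 - 8 * E * √3 + 33 * E - 28) * h3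

theorem mul_structureFn_eq_sq_add (E τ : ℝ) :
    E * structureFn E τ = (E * τ ^ 2 + E - 4 / 3) ^ 2 +
      (4 * E * (3 * E - 1) / 3 * (τ * τ) + 8 * E * (1 - E) * τ +
        -(4 / 9 * (3 * E - 1) * (3 * E - 4))) := by
  rw [structureFn]; ring

theorem discrim_neg_of_mem_Ioo (hE : E ∈ Ioo (2 / 3) ((2 + √3) / 3)) :
    discrim (4 * E * (3 * E - 1) / 3) (8 * E * (1 - E)) (-(4 / 9 * (3 * E - 1) * (3 * E - 4))) < 0 := by
  obtain ⟨hl, hr⟩ := hE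
  have h3 : √3 ^ 2 = 3 := sq_sqrt (by norm_num)
  have hfactor : 0 < 12 * E - 9 * E ^ 2 - 1 := by nlinarith [sqrt_nonneg 3]
  have hprod : 0 < E * (3 * E - 2) * (12 * E - 9 * E ^ 2 - 1) :=
    mul_pos (mul_pos (by linarith) (by linarith)) hfactor
  have hdiscrim : discrim (4 * E * (3 * E - 1) / 3) (8 * E * (1 - E))
      (-(4 / 9 * (3 * E - 1) * (3 * E - 4))) =
      -(128 / 27) * (E * (3 * E - 2) * (12 * E - 9 * E ^ 2 - 1)) := by
    rw [discrim]; ring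
  rw [hdiscrim]
  linarith

theorem structureFn_pos_of_mem_Ioo (hE : E ∈ Ioo (2 / 3) ((2 + √3) / 3)) (τ : ℝ) :
    0 < structureFn E τ := by
  have hE₀ : 0 < E := by linarith [hE.1]
  have ha : 0 < 4 * E * (3 * E - 1) / 3 := by
    have : 0 < 3 * E - 1 := by linarith [hE.1]
    positivity
  have hq := quadratic_pos_of_discrim_neg ha (discrim_neg_of_mem_Ioo hE) τ
  have hmul : 0 < E * structureFn E τ := by
    rw [mul_structureFn_eq_sq_add]
    exact add_pos_of_nonneg_of_pos (sq_nonneg _) hq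
  exact pos_of_mul_pos_right hmul hE₀.le

theorem mem_Ioo_of_structureFn_pos (h : ∀ τ, 0 < structureFn E τ) :
    E ∈ Ioo (2 / 3) ((2 + √3) / 3) := by
  have h₁ := h (-1)
  have h₂ := h (2 - √3)
  rw [structureFn_neg_one] at h₁
  rw [structureFn_two_sub_sqrt_three] at h₂
  have h5 : 5 / 3 < √3 := (lt_sqrt (by norm_num)).mpr (by norm_num)
  exact ⟨by linarith, by linarith [pos_of_mul_pos_right h₂ (by linarith)]⟩

end TaubNUT

open TaubNUT

theorem dS_taubNUT_positivity_iff_general (E : ℝ)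
    (A : ℝ → ℝ)
    (hA : ∀ τ : ℝ, A τ = E * τ ^ 4 - (4 - 6 * E) * τ ^ 2 - (8 * E - 8) * τ + (4 - 3 * E)) :
    (∀ τ : ℝ, 0 < A τ) ↔ E ∈ Set.Ioo (2 / 3) ((2 + Real.sqrt 3) / 3) := by
  rw [show A = structureFn E from funext hA]
  exact ⟨mem_Ioo_of_structureFn_pos, structureFn_pos_of_mem_Ioo⟩

/-- The dS Taub-NUT structure function `A(τ) = E τ⁴ - (4-6E) τ² - (8E-8) τ + 4-3E`
is positive for all real `τ` iff `E ∈ (2/3, (2+√3)/3)`. -/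
theorem dS_taubNUT_positivity_iff (E : ℝ) (hE : 0 < E)
    (A : ℝ → ℝ)
    (hA : ∀ τ : ℝ, A τ = E * τ ^ 4 - (4 - 6 * E) * τ ^ 2 - (8 * E - 8) * τ + (4 - 3 * E)) :
    (∀ τ : ℝ, 0 < A τ) ↔ E ∈ Set.Ioo (2 / 3) ((2 + Real.sqrt 3) / 3) :=
  dS_taubNUT_positivity_iff_general E A hA
end

section
/- For E = (2+√3)/3, the polynomial A(τ) = E τ^4 - (4 - 6E) τ^2 - (8E - 8) τ + 4 - 3E satisfies A(τ) ≥ 0 for all real τ, with A(τ₊) = 0 and A'(τ₊) = 0 at τ₊ = 2 - √3. -/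
/-!
At `E = (2 + √3)/3` the quartic factors as `(τ - (2 - √3))² (E τ² + 2τ/3 + 3E)`, and the
quadratic factor is positive because `9E (E τ² + 2τ/3 + 3E) = (3Eτ + 1)² + 27E² - 1`.
A double root is a zero of the derivative.
-/

open Real

theorem hasDerivAt_sub_sq_mul {𝕜 : Type*} [NontriviallyNormedField 𝕜] {g : 𝕜 → 𝕜} {r : 𝕜}
    (hg : DifferentiableAt 𝕜 g r) : HasDerivAt (fun x => (x - r) ^ 2 * g x) 0 r := by
  simpa using (((hasDerivAt_id r).sub_const r).fun_pow 2).fun_mul hg.hasDerivAt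

theorem quadratic_factor_pos {E : ℝ} (hE : 0 < E) (hE27 : 1 < 27 * E ^ 2) (τ : ℝ) :
    0 < E * τ ^ 2 + 2 / 3 * τ + 3 * E := by
  have h : 9 * E * (E * τ ^ 2 + 2 / 3 * τ + 3 * E) = (3 * E * τ + 1) ^ 2 + (27 * E ^ 2 - 1) := by
    ring
  have : 0 < 9 * E * (E * τ ^ 2 + 2 / 3 * τ + 3 * E) := by rw [h]; positivity
  exact pos_of_mul_pos_right this (by positivity)

theorem taubNUT_extreme_factor {E : ℝ} (hE : E = (2 + √3) / 3) (τ : ℝ) :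
    E * τ ^ 4 - (4 - 6 * E) * τ ^ 2 - (8 * E - 8) * τ + (4 - 3 * E)
      = (τ - (2 - √3)) ^ 2 * (E * τ ^ 2 + 2 / 3 * τ + 3 * E) := by
  have h3 : √3 ^ 2 = 3 := sq_sqrt (by norm_num)
  subst hE
  linear_combination (-(2 * τ ^ 3 + (√3 - 2) * τ ^ 2 + 8 * τ + 3 * (√3 - 2)) / 3) * h3

/-- At the extreme value `E = (2+√3)/3`, the dS Taub-NUT structure function
`A(τ) = E τ⁴ - (4-6E) τ² - (8E-8) τ + 4-3E` is nonnegative, with a degenerate zero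
at `τ₊ = 2 - √3` (i.e. `A(τ₊) = 0` and `A'(τ₊) = 0`). -/
theorem dS_taubNUT_extreme_upper (E : ℝ) (hE : E = (2 + Real.sqrt 3) / 3)
    (A : ℝ → ℝ)
    (hA : ∀ τ : ℝ, A τ = E * τ ^ 4 - (4 - 6 * E) * τ ^ 2 - (8 * E - 8) * τ + (4 - 3 * E)) :
    (∀ τ : ℝ, 0 ≤ A τ) ∧ A (2 - Real.sqrt 3) = 0 ∧ deriv A (2 - Real.sqrt 3) = 0 := by
  have hA : A = fun τ => (τ - (2 - √3)) ^ 2 * (E * τ ^ 2 + 2 / 3 * τ + 3 * E) :=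
    funext fun τ => (hA τ).trans (taubNUT_extreme_factor hE τ)
  have hE0 : 0 < E := by rw [hE]; positivity
  have hE27 : 1 < 27 * E ^ 2 := by
    rw [hE]; nlinarith [sqrt_nonneg 3, sq_sqrt (show (0 : ℝ) ≤ 3 by norm_num)]
  subst hA
  refine ⟨fun τ => mul_nonneg (sq_nonneg _) (quadratic_factor_pos hE0 hE27 τ).le, by simp, ?_⟩
  exact (hasDerivAt_sub_sq_mul (by fun_prop)).deriv
end

section
/- For E outside the closed interval [2/3, (2+√3)/3] with E > 0, the polynomial A(τ) = E τ^4 - (4 - 6E) τ^2 - (8E - 8) τ + 4 - 3E has a real zero. -/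
/-! At `E = 2/3` and at `E = (2 + √3)/3` the quartic has a double root, at `τ = -1` and at
`τ = 2 - √3` respectively. Below `2/3` the value at `-1` is negative while the value at `0` is
positive; above `(2 + √3)/3` the value at `2 - √3` is negative while the value at `2` is positive.
In both cases the intermediate value theorem gives a real zero. -/

open Real

noncomputable section

def horizonPoly (E τ : ℝ) : ℝ :=
  E * τ ^ 4 - (4 - 6 * E) * τ ^ 2 - (8 * E - 8) * τ + (4 - 3 * E)

namespace horizonPoly

variable (E : ℝ)

theorem continuous : Continuous (horizonPoly E) := by
  unfold horizonPoly; fun_prop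

theorem eval_neg_one : horizonPoly E (-1) = 12 * (E - 2 / 3) := by
  unfold horizonPoly; ring

theorem eval_zero : horizonPoly E 0 = 4 - 3 * E := by
  unfold horizonPoly; ring

theorem eval_two : horizonPoly E 2 = 21 * E + 4 := by
  unfold horizonPoly; ring

theorem eval_two_sub_sqrt_three :
    horizonPoly E (2 - √3) = 24 * (3 * √3 - 5) * ((2 + √3) / 3 - E) := by
  have h3 : √3 ^ 2 = 3 := sq_sqrt (by norm_num)
  unfold horizonPoly
  linear_combination (E * √3 ^ 2 - 8 * E * √3 + 33 * E - 28) * h3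

theorem exists_eq_zero_of_lt {E : ℝ} (hE : E < 2 / 3) : ∃ τ, horizonPoly E τ = 0 :=
  intermediate_value_univ (-1) 0 (continuous E)
    ⟨by rw [eval_neg_one]; linarith, by rw [eval_zero]; linarith⟩

theorem exists_eq_zero_of_gt {E : ℝ} (hE : (2 + √3) / 3 < E) : ∃ τ, horizonPoly E τ = 0 := by
  have hsqrt : 5 < 3 * √3 := by
    nlinarith [sq_sqrt (show (0 : ℝ) ≤ 3 by norm_num), sqrt_nonneg 3]
  have hE₀ : 0 < E := lt_trans (by positivity) hE
  refine intermediate_value_univ (2 - √3) 2 (continuous E) ⟨?_, ?_⟩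
  · rw [eval_two_sub_sqrt_three]
    exact mul_nonpos_of_nonneg_of_nonpos (by linarith) (by linarith)
  · rw [eval_two]; linarith

end horizonPoly

end

theorem dS_taubNUT_horizon_exists_general (E : ℝ)
    (hout : E ∉ Set.Icc (2 / 3) ((2 + Real.sqrt 3) / 3))
    (A : ℝ → ℝ)
    (hA : ∀ τ : ℝ, A τ = E * τ ^ 4 - (4 - 6 * E) * τ ^ 2 - (8 * E - 8) * τ + (4 - 3 * E)) :
    ∃ τ : ℝ, A τ = 0 := by
  obtain rfl : A = horizonPoly E := funext hA
  rw [Set.mem_Icc, not_and_or, not_le, not_le] at hout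
  rcases hout with hlow | hhigh
  · exact horizonPoly.exists_eq_zero_of_lt hlow
  · exact horizonPoly.exists_eq_zero_of_gt hhigh

/-- For `E > 0` outside `[2/3, (2+√3)/3]`, the dS Taub-NUT structure function
`A(τ)` has a real zero (corresponding to a horizon). -/
theorem dS_taubNUT_horizon_exists (E : ℝ) (hE : 0 < E)
    (hout : E ∉ Set.Icc (2 / 3) ((2 + Real.sqrt 3) / 3))
    (A : ℝ → ℝ)
    (hA : ∀ τ : ℝ, A τ = E * τ ^ 4 - (4 - 6 * E) * τ ^ 2 - (8 * E - 8) * τ + (4 - 3 * E)) :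
    ∃ τ : ℝ, A τ = 0 :=
  dS_taubNUT_horizon_exists_general E hout A hA
end

section
/- For E in the interval (1, (2+√3)/3), the de Sitter Taub-NUT mass m^{dS}(E) = (l/2)√E (E - 1) is strictly positive, while the metric parameter E lies in the range (2/3, (2+√3)/3) where the dS Taub-NUT spacetime is globally regular. Hence there exist E with m^{dS}(E) > 0 = m₀, giving a counterexample to the maximal mass conjecture. -/
lemma one_lt_two_add_sqrt_three_div_three : 1 < (2 + Real.sqrt 3) / 3 := by
  have : (1 : ℝ) < Real.sqrt 3 := by
    rw [Real.lt_sqrt zero_le_one]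
    norm_num
  linarith

lemma taubNUT_mass_pos {l E : ℝ} (hl : 0 < l) (hE : 1 < E) :
    0 < l / 2 * Real.sqrt E * (E - 1) := by
  have : 0 < Real.sqrt E := Real.sqrt_pos.mpr (by linarith)
  have : 0 < E - 1 := by linarith
  positivity

/-- For `E ∈ (1, (2+√3)/3)` the dS Taub-NUT mass `m^{dS}(E) = (l/2)√E (E-1)` is
strictly positive while `E` lies in the range `(2/3, (2+√3)/3)` of global regularity;
hence there exists `E` in the regular range with `m^{dS}(E) > 0 = m₀`, contradicting
the maximal mass conjecture. -/
theorem dS_taubNUT_maximal_mass_counterexample (l : ℝ) (hl : 0 < l)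
    (mdS : ℝ → ℝ)
    (hmdS : ∀ E : ℝ, mdS E = (l / 2) * Real.sqrt E * (E - 1)) :
    (∀ E ∈ Set.Ioo (1 : ℝ) ((2 + Real.sqrt 3) / 3),
        0 < mdS E ∧ E ∈ Set.Ioo (2 / 3 : ℝ) ((2 + Real.sqrt 3) / 3)) ∧
    ∃ E ∈ Set.Ioo (2 / 3 : ℝ) ((2 + Real.sqrt 3) / 3), mdS E > 0 := by
  have positive_and_regular : ∀ E ∈ Set.Ioo (1 : ℝ) ((2 + Real.sqrt 3) / 3),
      0 < mdS E ∧ E ∈ Set.Ioo (2 / 3 : ℝ) ((2 + Real.sqrt 3) / 3) := by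
    rintro E ⟨hE1, hE2⟩
    exact ⟨hmdS E ▸ taubNUT_mass_pos hl hE1, by linarith, hE2⟩
  obtain ⟨E, hE⟩ := exists_between one_lt_two_add_sqrt_three_div_three
  exact ⟨positive_and_regular, E, (positive_and_regular E hE).2, (positive_and_regular E hE).1⟩
end

section
/- Let φ : [ρ₀, ∞) → ℝ be differentiable with φ'(ρ) ≤ -ρ φ(ρ)²/3 for all ρ ≥ ρ₀ > 0, and suppose φ(ρ) is defined and finite for all ρ ≥ ρ₀. Then φ(ρ) ≥ 0 for all ρ, and moreover φ(ρ) ≤ 6/(ρ² - ρ₀²) for ρ > ρ₀, so φ(ρ) → 0 as ρ → ∞. -/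
/-!
Since `φ' ≤ 0`, a negative value of `φ` persists. Wherever `φ ≠ 0`, the Riccati inequality says
exactly that `1/φ - ρ²/6` is nondecreasing. If `φ` were negative at some `ρ₁`, then `1/φ(ρ)` would
grow at least like `ρ²/6` on `[ρ₁, ∞)` and become nonnegative: contradiction. If `φ(ρ) > 0`, then
`φ > 0` on `[ρ₀, ρ]`, so `1/φ(ρ) ≥ 1/φ(ρ₀) + (ρ² - ρ₀²)/6 > (ρ² - ρ₀²)/6`.
-/

open Set Filter

theorem monotoneOn_inv_sub_of_deriv_le_neg_mul_sq {s : Set ℝ} (hs : Convex ℝ s)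
    {φ g g' : ℝ → ℝ} (hφ : ∀ x ∈ s, DifferentiableAt ℝ φ x) (hg : ∀ x ∈ s, HasDerivAt g (g' x) x)
    (hne : ∀ x ∈ s, φ x ≠ 0) (hineq : ∀ x ∈ interior s, deriv φ x ≤ -g' x * φ x ^ 2) :
    MonotoneOn (fun x => (φ x)⁻¹ - g x) s := by
  have hderiv : ∀ x ∈ s,
      HasDerivAt (fun x => (φ x)⁻¹ - g x) (-deriv φ x / φ x ^ 2 - g' x) x := fun x hx =>
    ((hφ x hx).hasDerivAt.inv (hne x hx)).sub (hg x hx)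
  refine monotoneOn_of_hasDerivWithinAt_nonneg hs
    (fun x hx => (hderiv x hx).continuousAt.continuousWithinAt)
    (fun x hx => (hderiv x (interior_subset hx)).hasDerivWithinAt) fun x hx => ?_
  have hsq : 0 < φ x ^ 2 := sq_pos_of_ne_zero (hne x (interior_subset hx))
  rw [sub_nonneg, le_div_iff₀ hsq]
  linarith [hineq x hx]

theorem exists_nonneg_of_monotoneOn_inv_sub {φ g : ℝ → ℝ} {a : ℝ}
    (hmono : MonotoneOn (fun x => (φ x)⁻¹ - g x) (Ici a)) (hg : Tendsto g atTop atTop) :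
    ∃ x, a ≤ x ∧ 0 ≤ φ x := by
  obtain ⟨x, hgx, hax⟩ :=
    ((hg.eventually_ge_atTop (g a - (φ a)⁻¹)).and (eventually_ge_atTop a)).exists
  have hstep := hmono self_mem_Ici hax hax
  simp only at hstep
  exact ⟨x, hax, inv_nonneg.mp (by linarith)⟩

theorem le_inv_sub_of_monotoneOn_inv_sub {φ g : ℝ → ℝ} {s : Set ℝ} {a b : ℝ}
    (hmono : MonotoneOn (fun x => (φ x)⁻¹ - g x) s) (ha : a ∈ s) (hb : b ∈ s) (hab : a ≤ b)
    (hφa : 0 < φ a) (hg : g a < g b) :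
    φ b ≤ (g b - g a)⁻¹ := by
  have hstep := hmono ha hb hab
  simp only at hstep
  have hinv : g b - g a ≤ (φ b)⁻¹ := by linarith [inv_pos.mpr hφa]
  simpa using inv_anti₀ (sub_pos.mpr hg) hinv

section Riccati

variable {ρ₀ : ℝ} {φ : ℝ → ℝ} (hdiff : ∀ ρ ∈ Ici ρ₀, DifferentiableAt ℝ φ ρ)
  (hineq : ∀ ρ ∈ Ici ρ₀, deriv φ ρ ≤ -ρ * φ ρ ^ 2 / 3)
include hdiff hineq

theorem riccati_antitoneOn (hρ₀ : 0 ≤ ρ₀) : AntitoneOn φ (Ici ρ₀) := by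
  refine antitoneOn_of_deriv_nonpos (convex_Ici ρ₀)
    (fun x hx => (hdiff x hx).continuousAt.continuousWithinAt)
    (fun x hx => (hdiff x (interior_subset hx)).differentiableWithinAt) fun x hx => ?_
  rw [interior_Ici] at hx
  have hx₀ : 0 ≤ x := hρ₀.trans (le_of_lt hx)
  nlinarith [hineq x (mem_Ici.mpr hx.le), sq_nonneg (φ x)]

theorem riccati_monotoneOn_inv_sub {s : Set ℝ} (hs : Convex ℝ s) (hsub : s ⊆ Ici ρ₀)
    (hne : ∀ x ∈ s, φ x ≠ 0) : MonotoneOn (fun x => (φ x)⁻¹ - x ^ 2 / 6) s :=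
  monotoneOn_inv_sub_of_deriv_le_neg_mul_sq hs (fun x hx => hdiff x (hsub hx))
    (fun x _ => by simpa using ((hasDerivAt_pow 2 x).div_const 6)) hne fun x hx => by
      have := hineq x (hsub (interior_subset hx))
      linarith

theorem riccati_nonneg (hρ₀ : 0 ≤ ρ₀) : ∀ ρ ∈ Ici ρ₀, 0 ≤ φ ρ := by
  intro ρ₁ hρ₁
  by_contra! hneg
  have hsub : Ici ρ₁ ⊆ Ici ρ₀ := Ici_subset_Ici.mpr hρ₁
  have hnegOn : ∀ x ∈ Ici ρ₁, φ x < 0 := fun x hx =>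
    (riccati_antitoneOn hdiff hineq hρ₀ hρ₁ (hsub hx) hx).trans_lt hneg
  have hmono := riccati_monotoneOn_inv_sub hdiff hineq (convex_Ici ρ₁) hsub
    fun x hx => (hnegOn x hx).ne
  have hg : Tendsto (fun x : ℝ => x ^ 2 / 6) atTop atTop :=
    (tendsto_pow_atTop two_ne_zero).atTop_div_const (by norm_num)
  obtain ⟨x, hx, hφx⟩ := exists_nonneg_of_monotoneOn_inv_sub hmono hg
  exact (hnegOn x hx).not_ge hφx

theorem riccati_le_div (hρ₀ : 0 ≤ ρ₀) {ρ : ℝ} (hρ : ρ₀ < ρ) :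
    φ ρ ≤ 6 / (ρ ^ 2 - ρ₀ ^ 2) := by
  have hden : 0 < ρ ^ 2 - ρ₀ ^ 2 := by nlinarith
  rcases (riccati_nonneg hdiff hineq hρ₀ ρ hρ.le).eq_or_lt with hzero | hpos
  · rw [← hzero]
    positivity
  have hposOn : ∀ x ∈ Icc ρ₀ ρ, 0 < φ x := fun x hx =>
    hpos.trans_le (riccati_antitoneOn hdiff hineq hρ₀ hx.1 hρ.le hx.2)
  have hmono := riccati_monotoneOn_inv_sub hdiff hineq (convex_Icc ρ₀ ρ) (fun x hx => hx.1)
    fun x hx => (hposOn x hx).ne'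
  have hinv := le_inv_sub_of_monotoneOn_inv_sub hmono (left_mem_Icc.mpr hρ.le)
    (right_mem_Icc.mpr hρ.le) hρ.le (hposOn ρ₀ (left_mem_Icc.mpr hρ.le))
    (by linarith)
  calc φ ρ ≤ (ρ ^ 2 / 6 - ρ₀ ^ 2 / 6)⁻¹ := hinv
    _ = 6 / (ρ ^ 2 - ρ₀ ^ 2) := by field_simp

end Riccati

/-- If `φ` is globally defined on `[ρ₀, ∞)` with `ρ₀ > 0` and satisfies the Riccati
inequality `φ' ≤ -ρ φ²/3`, then `φ ≥ 0` everywhere and `φ(ρ) ≤ 6/(ρ² - ρ₀²)` for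
`ρ > ρ₀`; in particular `φ(ρ) → 0` as `ρ → ∞`. -/
theorem riccati_global_decay (ρ₀ : ℝ) (hρ₀ : 0 < ρ₀) (φ : ℝ → ℝ)
    (hdiff : ∀ ρ ∈ Set.Ici ρ₀, DifferentiableAt ℝ φ ρ)
    (hineq : ∀ ρ ∈ Set.Ici ρ₀, deriv φ ρ ≤ -ρ * (φ ρ) ^ 2 / 3) :
    (∀ ρ ∈ Set.Ici ρ₀, 0 ≤ φ ρ) ∧
    (∀ ρ : ℝ, ρ₀ < ρ → φ ρ ≤ 6 / (ρ ^ 2 - ρ₀ ^ 2)) ∧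
    Filter.Tendsto φ Filter.atTop (nhds 0) := by
  have hnonneg := riccati_nonneg hdiff hineq hρ₀.le
  have hle := fun ρ (hρ : ρ₀ < ρ) => riccati_le_div hdiff hineq hρ₀.le hρ
  have hbound : Tendsto (fun ρ : ℝ => 6 / (ρ ^ 2 - ρ₀ ^ 2)) atTop (nhds 0) :=
    tendsto_const_nhds.div_atTop
      (tendsto_atTop_add_const_right _ _ (tendsto_pow_atTop two_ne_zero))
  refine ⟨hnonneg, hle, tendsto_of_tendsto_of_tendsto_of_le_of_le' tendsto_const_nhds hbound ?_ ?_⟩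
  · filter_upwards [eventually_ge_atTop ρ₀] with ρ hρ using hnonneg ρ hρ
  · filter_upwards [eventually_gt_atTop ρ₀] with ρ hρ using hle ρ hρ
end
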